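/- Let p and r be distinct primes, n ≥ 1, K a field of characteristic r, and ζ ∈ K a primitive p^n-th root of unity. Let χ ⊆ ℤ/p^n be a cyclotomic coset mod r all of whose elements have greatest common divisor p^t with p^n (0 ≤ t ≤ n), and let s be an integer with t < s ≤ n. Set η = ζ^{p^{n−s}}, a primitive p^s-th root of unity, fix a ∈ χ and let χ' ⊆ ℤ/p^s be the cyclotomic coset mod r of the reduction of a modulo p^s. Then f_χ(X) = ∏_{u ∈ χ}(X − ζ^u) divides f_{χ'}(X^{p^{n−s}}) in K[X], where f_{χ'}(Y) = ∏_{v ∈ χ'}(Y − η^v); moreover the cardinality of χ' divides the cardinality of χ. -/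
import Mathlib

/-- The cyclotomic coset mod `r` of `a` in `ℤ/m`: the orbit of `a` under the map
`u ↦ r·u` on `ZMod m`. -/
noncomputable def cycCoset (r m : ℕ) [NeZero m] (a : ZMod m) : Finset (ZMod m) :=
  (Set.toFinite {b : ZMod m | ∃ k : ℕ, b = (r : ZMod m) ^ k * a}).toFinset

/-- `C(m,r)`: the set of cyclotomic cosets mod `r` in `ℤ/m`. -/
noncomputable def cycCosets (r m : ℕ) [NeZero m] : Finset (Finset (ZMod m)) :=
  Finset.image (cycCoset r m) Finset.univ

lemma mem_cycCoset {r M : ℕ} [NeZero M] {a b : ZMod M} :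
    b ∈ cycCoset r M a ↔ ∃ k : ℕ, b = (r : ZMod M) ^ k * a := by
  simp [cycCoset]

section aux

variable {r M : ℕ} [NeZero M] {a : ZMod M}

omit [NeZero M] in
lemma per_mul_aux (q : ℕ) {e : ℕ} (he : (r : ZMod M) ^ e * a = a) :
    (r : ZMod M) ^ (e * q) * a = a := by
  induction q with
  | zero => simp
  | succ k ih =>
      rw [Nat.mul_succ, pow_add, mul_assoc, he, ih]

omit [NeZero M] in
lemma per_mod_aux {e k : ℕ} (he : (r : ZMod M) ^ e * a = a) :
    (r : ZMod M) ^ k * a = (r : ZMod M) ^ (k % e) * a := by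
  conv_lhs => rw [← Nat.mod_add_div k e, pow_add, mul_assoc,
    per_mul_aux (k / e) he]

omit [NeZero M] in
/-- cancellation: from `r^i a = r^j a` with `i ≤ j` we get `r^(j-i) a = a`,
provided some power of `r` fixes `a`. -/
lemma per_cancel {e i j : ℕ} (he0 : 0 < e) (he : (r : ZMod M) ^ e * a = a)
    (hle : i ≤ j) (hij : (r : ZMod M) ^ i * a = (r : ZMod M) ^ j * a) :
    (r : ZMod M) ^ (j - i) * a = a := by
  have hx : i ≤ e * i := Nat.le_mul_of_pos_left i he0
  have h1 : (r : ZMod M) ^ (e * i) * a = a := per_mul_aux i he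
  have harith : j - i + e * i = (e * i - i) + j := by omega
  calc (r : ZMod M) ^ (j - i) * a
      = (r : ZMod M) ^ (j - i) * ((r : ZMod M) ^ (e * i) * a) := by rw [h1]
    _ = (r : ZMod M) ^ (j - i + e * i) * a := by rw [pow_add, mul_assoc]
    _ = (r : ZMod M) ^ (e * i - i) * ((r : ZMod M) ^ j * a) := by
        rw [harith, pow_add, mul_assoc]
    _ = (r : ZMod M) ^ (e * i - i) * ((r : ZMod M) ^ i * a) := by rw [hij]
    _ = (r : ZMod M) ^ (e * i - i + i) * a := by rw [pow_add, mul_assoc]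
    _ = (r : ZMod M) ^ (e * i) * a := by rw [Nat.sub_add_cancel hx]
    _ = a := h1

variable (h : ∃ e, 0 < e ∧ (r : ZMod M) ^ e * a = a)

omit [NeZero M] in
lemma per_dvd {e : ℕ} (he : (r : ZMod M) ^ e * a = a) : Nat.find h ∣ e := by
  rcases Nat.eq_zero_or_pos e with rfl | hpos
  · exact Dvd.intro 0 rfl
  have hspec := (Nat.find_spec h).2
  have hmod : (r : ZMod M) ^ (e % Nat.find h) * a = a := by
    rw [← per_mod_aux hspec, he]
  by_contra hnd
  have hne : e % Nat.find h ≠ 0 := fun h0 => hnd (Nat.dvd_of_mod_eq_zero h0)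
  exact Nat.find_min h (Nat.mod_lt _ (Nat.find_spec h).1) ⟨Nat.pos_of_ne_zero hne, hmod⟩

lemma cycCoset_eq_image :
    cycCoset r M a =
      Finset.image (fun k => (r : ZMod M) ^ k * a) (Finset.range (Nat.find h)) := by
  ext b
  rw [mem_cycCoset, Finset.mem_image]
  constructor
  · rintro ⟨k, rfl⟩
    exact ⟨k % Nat.find h, Finset.mem_range.2 (Nat.mod_lt _ (Nat.find_spec h).1),
      (per_mod_aux (Nat.find_spec h).2).symm⟩
  · rintro ⟨k, -, rfl⟩
    exact ⟨k, rfl⟩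

lemma card_cycCoset : (cycCoset r M a).card = Nat.find h := by
  rw [cycCoset_eq_image h, Finset.card_image_of_injOn, Finset.card_range]
  intro i hi j hj hij
  simp only [Finset.coe_range, Set.mem_Iio] at hi hj
  have hij' : (r : ZMod M) ^ i * a = (r : ZMod M) ^ j * a := hij
  rcases le_total i j with hle | hle
  · have key := per_cancel (Nat.find_spec h).1 (Nat.find_spec h).2 hle hij'
    have := per_dvd h key
    rcases Nat.eq_zero_or_pos (j - i) with h0 | hpos
    · omega
    · have := Nat.le_of_dvd hpos this; omega
  · have key := per_cancel (Nat.find_spec h).1 (Nat.find_spec h).2 hle hij'.symm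
    have := per_dvd h key
    rcases Nat.eq_zero_or_pos (i - j) with h0 | hpos
    · omega
    · have := Nat.le_of_dvd hpos this; omega

end aux

lemma totient_pow_eq_one {r M : ℕ} [NeZero M] (hcop : Nat.Coprime r M) :
    (r : ZMod M) ^ Nat.totient M = 1 := by
  have := Nat.ModEq.pow_totient hcop
  have h2 : ((r ^ Nat.totient M : ℕ) : ZMod M) = ((1 : ℕ) : ZMod M) :=
    (ZMod.natCast_eq_natCast_iff _ _ _).2 this
  push_cast at h2
  exact h2

lemma exists_per {r M : ℕ} [NeZero M] (hcop : Nat.Coprime r M) (a : ZMod M) :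
    ∃ e, 0 < e ∧ (r : ZMod M) ^ e * a = a :=
  ⟨Nat.totient M, Nat.totient_pos.2 (Nat.pos_of_ne_zero (NeZero.ne M)),
    by rw [totient_pow_eq_one hcop, one_mul]⟩

lemma cycCoset_eq_of_mem {r M : ℕ} [NeZero M] (hcop : Nat.Coprime r M)
    {a b : ZMod M} (hab : a ∈ cycCoset r M b) : cycCoset r M a = cycCoset r M b := by
  obtain ⟨k, rfl⟩ := mem_cycCoset.1 hab
  have hE := totient_pow_eq_one (M := M) hcop
  have hEpos : 0 < Nat.totient M :=
    Nat.totient_pos.2 (Nat.pos_of_ne_zero (NeZero.ne M))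
  have hE1 : 1 ≤ Nat.totient M := hEpos
  ext c
  rw [mem_cycCoset, mem_cycCoset]
  constructor
  · rintro ⟨j, rfl⟩
    exact ⟨j + k, by rw [pow_add, mul_assoc]⟩
  · rintro ⟨j, rfl⟩
    refine ⟨j + (Nat.totient M - 1) * k, ?_⟩
    rw [← mul_assoc, ← pow_add]
    have harith : j + (Nat.totient M - 1) * k + k = j + Nat.totient M * k := by
      rw [add_assoc, ← Nat.succ_mul, Nat.succ_eq_add_one, Nat.sub_add_cancel hE1]
    rw [harith, pow_add, pow_mul, hE, one_pow, mul_one]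

/-- Let `p, r` be distinct primes, `n ≥ 1`, `K` a field of characteristic
`r`, and `ζ ∈ K` a primitive `p^n`-th root of unity.  Let `χ ⊆ ℤ/p^n` be a cyclotomic
coset mod `r` all of whose elements have gcd `p^t` with `p^n` (`0 ≤ t ≤ n`), and let
`t < s ≤ n`.  Set `η = ζ^{p^{n−s}}`, fix `a ∈ χ`, and let `χ' ⊆ ℤ/p^s` be the cyclotomic
coset mod `r` of the reduction of `a` modulo `p^s`.  Then `f_χ(X)` divides
`f_{χ'}(X^{p^{n−s}})` in `K[X]`, and `|χ'|` divides `|χ|`.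
(Here `m = p^n` and `m' = p^s`; the hypothesis `hdvd : m' ∣ m` is implied by the others.) -/
theorem stmt12 {p r : ℕ} (hp : p.Prime) (hr : r.Prime) (hpr : p ≠ r)
    {n : ℕ} (hn : 1 ≤ n) (m m' : ℕ) [NeZero m] [NeZero m']
    {s t : ℕ} (hts : t < s) (hsn : s ≤ n) (htn : t ≤ n)
    (hm : m = p ^ n) (hm' : m' = p ^ s) (hdvd : m' ∣ m)
    {K : Type*} [Field K] [CharP K r] {ζ : K} (hζ : IsPrimitiveRoot ζ m)
    (χ : Finset (ZMod m)) (hχ : χ ∈ cycCosets r m)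
    (hgcd : ∀ a ∈ χ, Nat.gcd a.val m = p ^ t)
    (a : ZMod m) (ha : a ∈ χ) :
    ((∏ u ∈ χ, (Polynomial.X - Polynomial.C (ζ ^ u.val))) ∣
      Polynomial.comp
        (∏ v ∈ cycCoset r m' (ZMod.castHom hdvd (ZMod m') a),
          (Polynomial.X - Polynomial.C ((ζ ^ (p ^ (n - s))) ^ v.val)))
        ((Polynomial.X : Polynomial K) ^ (p ^ (n - s))))
    ∧ (cycCoset r m' (ZMod.castHom hdvd (ZMod m') a)).card ∣ χ.card := by
  have hrp : r ≠ p := fun h => hpr h.symm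
  have hcop : Nat.Coprime r m := by
    rw [hm]; exact Nat.Coprime.pow_right _ ((Nat.coprime_primes hr hp).2 hrp)
  have hcop' : Nat.Coprime r m' := by
    rw [hm']; exact Nat.Coprime.pow_right _ ((Nat.coprime_primes hr hp).2 hrp)
  obtain ⟨b, -, hb⟩ := Finset.mem_image.1 hχ
  have hχa : χ = cycCoset r m a := by
    rw [← hb]; exact (cycCoset_eq_of_mem hcop (hb ▸ ha)).symm
  set N := p ^ (n - s) with hN
  have hmN : m' * N = m := by
    rw [hm, hm', hN, ← pow_add]
    congr 1; omega
  have hcast : ∀ u ∈ χ, ZMod.castHom hdvd (ZMod m') u ∈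
      cycCoset r m' (ZMod.castHom hdvd (ZMod m') a) := by
    intro u hu
    rw [hχa, mem_cycCoset] at hu
    obtain ⟨k, rfl⟩ := hu
    rw [mem_cycCoset]
    exact ⟨k, by rw [map_mul, map_pow, map_natCast]⟩
  constructor
  · -- divisibility part
    apply Finset.prod_dvd_of_coprime
    · intro u hu w hw huw
      apply Polynomial.isCoprime_X_sub_C_of_isUnit_sub
      rw [isUnit_iff_ne_zero, sub_ne_zero]
      intro heq
      exact huw (ZMod.val_injective m
        (hζ.pow_inj (ZMod.val_lt u) (ZMod.val_lt w) heq))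
    · intro u hu
      rw [Polynomial.dvd_iff_isRoot]
      have hmem := hcast u hu
      rw [Polynomial.IsRoot, Polynomial.eval_comp, Polynomial.eval_pow,
        Polynomial.eval_X, Polynomial.eval_prod]
      apply Finset.prod_eq_zero hmem
      rw [Polynomial.eval_sub, Polynomial.eval_X, Polynomial.eval_C, sub_eq_zero,
        ← pow_mul, ← pow_mul]
      have hval : (ZMod.castHom hdvd (ZMod m') u).val = u.val % m' := by
        rw [ZMod.castHom_apply, ← ZMod.natCast_val, ZMod.val_natCast]
      have hle : u.val % m' * N ≤ u.val * N :=
        Nat.mul_le_mul_right _ (Nat.mod_le _ _)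
      have key : m ∣ u.val * N - u.val % m' * N := by
        have hx := Nat.mod_add_div u.val m'
        have hsub : u.val - u.val % m' = m' * (u.val / m') := by omega
        rw [← Nat.sub_mul, hsub]
        refine ⟨u.val / m', ?_⟩
        calc m' * (u.val / m') * N = m' * N * (u.val / m') := by ring
          _ = m * (u.val / m') := by rw [hmN]
      obtain ⟨c, hc⟩ := key
      have hx : u.val * N = N * (ZMod.castHom hdvd (ZMod m') u).val + m * c := by
        rw [hval, Nat.mul_comm N]
        omega
      rw [hx, pow_add, pow_mul, pow_mul, hζ.pow_eq_one, one_pow, mul_one]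
  · -- cardinality part
    have hpera := exists_per hcop a
    have hpera' := exists_per hcop' (ZMod.castHom hdvd (ZMod m') a)
    rw [hχa, card_cycCoset hpera, card_cycCoset hpera']
    apply per_dvd hpera'
    have hspec := (Nat.find_spec hpera).2
    have := congrArg (ZMod.castHom hdvd (ZMod m')) hspec
    rw [map_mul, map_pow, map_natCast] at this
    exact this
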